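/- arXiv:2604.23404 — 2 statements merged into one kernel-verified Lean document; each statement's English description precedes it below -/
import Mathlib

section
/- Let k, n, r be integers and let M = !![2k+1, r; 0, 2n+1] over ℤ. Then M can be written as A² − B² for some upper-triangular 2×2 integer matrices A and B if and only if gcd(k+n, 2) divides r. Equivalently: if k and n have opposite parity then M is representable for every r, and if k and n have the same parity then M is representable exactly when r is even. -/
/-!
Squaring an upper-triangular matrix `!![a, b; 0, c]` gives `!![a², b (a + c); 0, c²]`, so the
question is when `2k + 1 = a² - d²`, `2n + 1 = c² - f²` and `r = b (a + c) - e (d + f)`.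
Reducing `a² - d² = 2k + 1` modulo 4 forces `a ≡ k + 1` and `d ≡ k` modulo 2, hence both
`a + c` and `d + f` are congruent to `k + n` modulo 2 and divisible by `gcd (k + n) 2`, which
therefore divides `r`. Conversely, `a = k + 1, d = k, c = n + 1, f = n` leaves
`r = b (k + n + 2) - e (k + n)`, solvable by Bézout since `gcd (k + n + 2) (k + n) = gcd (k + n) 2`.
-/

/-- A 2×2 matrix is upper-triangular if its lower-left entry is 0. -/
def IsUpperTriangular {R : Type*} [Ring R] (A : Matrix (Fin 2) (Fin 2) R) : Prop :=
  A 1 0 = 0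

/-- `T` is representable as a difference of two squares of upper-triangular matrices. -/
def ReprDiffSqUT {R : Type*} [Ring R] (T : Matrix (Fin 2) (Fin 2) R) : Prop :=
  ∃ A B : Matrix (Fin 2) (Fin 2) R,
    IsUpperTriangular A ∧ IsUpperTriangular B ∧ T = A ^ 2 - B ^ 2

theorem IsUpperTriangular.sq_eq {R : Type*} [CommRing R] {A : Matrix (Fin 2) (Fin 2) R}
    (hA : IsUpperTriangular A) :
    A ^ 2 = !![A 0 0 ^ 2, A 0 1 * (A 0 0 + A 1 1); 0, A 1 1 ^ 2] := by
  ext i j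
  fin_cases i <;> fin_cases j <;> simp [sq, Matrix.mul_apply, show A 1 0 = 0 from hA, mul_add, mul_comm]

theorem reprDiffSqUT_iff {R : Type*} [CommRing R] {p q s : R} :
    ReprDiffSqUT !![p, q; 0, s] ↔ ∃ a b c d e f : R,
      p = a ^ 2 - d ^ 2 ∧ q = b * (a + c) - e * (d + f) ∧ s = c ^ 2 - f ^ 2 := by
  constructor
  · rintro ⟨A, B, hA, hB, h⟩
    rw [hA.sq_eq, hB.sq_eq] at h
    exact ⟨A 0 0, A 0 1, A 1 1, B 0 0, B 0 1, B 1 1,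
      by simpa [Fin.forall_fin_two, and_assoc] using congr_fun₂ h⟩
  · rintro ⟨a, b, c, d, e, f, rfl, rfl, rfl⟩
    have hA : IsUpperTriangular !![a, b; 0, c] := rfl
    have hB : IsUpperTriangular !![d, e; 0, f] := rfl
    refine ⟨_, _, hA, hB, ?_⟩
    rw [hA.sq_eq, hB.sq_eq]
    ext i j
    fin_cases i <;> fin_cases j <;> simp

theorem two_dvd_sub_of_sq_sub_sq_eq_two_mul_add_one {a d k : ℤ}
    (h : a ^ 2 - d ^ 2 = 2 * k + 1) : 2 ∣ a - k - 1 ∧ 2 ∣ d - k := by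
  obtain ⟨u, rfl | rfl⟩ := Int.even_or_odd' a <;> obtain ⟨v, rfl | rfl⟩ := Int.even_or_odd' d <;>
    ring_nf at h <;> omega

theorem odd_diagonal_case (k n r : ℤ) :
    ReprDiffSqUT !![2 * k + 1, r; 0, 2 * n + 1] ↔ (Int.gcd (k + n) 2 : ℤ) ∣ r := by
  set g : ℤ := (Int.gcd (k + n) 2 : ℤ)
  rw [reprDiffSqUT_iff]
  constructor
  · rintro ⟨a, b, c, d, e, f, hk, rfl, hn⟩
    obtain ⟨ha, hd⟩ := two_dvd_sub_of_sq_sub_sq_eq_two_mul_add_one hk.symm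
    obtain ⟨hc, hf⟩ := two_dvd_sub_of_sq_sub_sq_eq_two_mul_add_one hn.symm
    have hg_dvd_of_congr {x : ℤ} (hx : 2 ∣ x - (k + n)) : g ∣ x := by
      simpa using dvd_add ((Int.gcd_dvd_right _ _).trans hx) (Int.gcd_dvd_left (k + n) 2)
    exact dvd_sub (dvd_mul_of_dvd_right (hg_dvd_of_congr (by omega)) b)
      (dvd_mul_of_dvd_right (hg_dvd_of_congr (by omega)) e)
  · rintro ⟨s, rfl⟩
    have hg : g = Int.gcd (k + n + 2) (k + n) := by
      rw [Int.gcd_self_add_left, Int.gcd_comm]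
    refine ⟨k + 1, Int.gcdA (k + n + 2) (k + n) * s, n + 1, k,
      -(Int.gcdB (k + n + 2) (k + n) * s), n, ?_⟩
    rw [hg, Int.gcd_eq_gcd_ab]
    exact ⟨by ring, by ring, by ring⟩
end

section
/- Let i, j ∈ {0, 1, 2, 3} and let r be an element of ℤ/16ℤ. The matrix M = !![4i, r; 0, 4j] over ℤ/16ℤ cannot be written as A² − B² for any upper-triangular 2×2 matrices A, B over ℤ/16ℤ if and only if one of the following holds: (1) (i, j) ∈ {(1,1), (3,3)} and r ≢ 0 (mod 4); (2) (i, j) ∈ {(1,3), (2,2), (3,1)} and r ≢ 0 (mod 2). -/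
lemma key (x y r : ZMod 16) :
    ReprDiffSqUT !![x, r; 0, y] ↔
      ∃ a d c f b e : ZMod 16, a^2 - d^2 = x ∧ c^2 - f^2 = y ∧ b*(a+c) - e*(d+f) = r := by
  constructor
  · rintro ⟨A, B, hA, hB, hT⟩
    simp only [IsUpperTriangular] at hA hB
    refine ⟨A 0 0, B 0 0, A 1 1, B 1 1, A 0 1, B 0 1, ?_, ?_, ?_⟩
    · have h := congrFun (congrFun hT 0) 0
      simp [pow_two, Matrix.mul_apply, Fin.sum_univ_two, hA, hB] at h
      linear_combination -h
    · have h := congrFun (congrFun hT 1) 1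
      simp [pow_two, Matrix.mul_apply, Fin.sum_univ_two, hA, hB] at h
      linear_combination -h
    · have h := congrFun (congrFun hT 0) 1
      simp [pow_two, Matrix.mul_apply, Fin.sum_univ_two, hA, hB] at h
      linear_combination -h
  · rintro ⟨a, d, c, f, b, e, h1, h2, h3⟩
    refine ⟨!![a, b; 0, c], !![d, e; 0, f], rfl, rfl, ?_⟩
    ext i j
    fin_cases i <;> fin_cases j <;>
      simp [pow_two, Matrix.mul_apply, Fin.sum_univ_two] <;>
      first
        | linear_combination -h1
        | linear_combination -h2
        | linear_combination -h3

lemma L4 : ∀ a d : ZMod 16, a^2 - d^2 = 4 → (∃ u, a = 4*u + 2) ∧ (∃ v, d = 4*v) := by decide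
lemma L12 : ∀ a d : ZMod 16, a^2 - d^2 = 12 → (∃ u, a = 4*u) ∧ (∃ v, d = 4*v + 2) := by decide
lemma L8 : ∀ a d : ZMod 16, a^2 - d^2 = 8 → (∃ u, a = 2*u + 1) ∧ (∃ v, d = 2*v + 1) := by decide

lemma div4_iff (r : ZMod 16) : (∃ s : ℤ, 4 ∣ s ∧ r = (s : ZMod 16)) ↔ ∃ t : ZMod 16, r = 4 * t := by
  constructor
  · rintro ⟨s, ⟨k, rfl⟩, rfl⟩
    exact ⟨(k : ZMod 16), by push_cast; ring⟩
  · rintro ⟨t, rfl⟩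
    refine ⟨4 * (t.val : ℤ), ⟨_, rfl⟩, ?_⟩
    push_cast
    simp [ZMod.natCast_val, ZMod.cast_id]

lemma div2_iff (r : ZMod 16) : (∃ s : ℤ, 2 ∣ s ∧ r = (s : ZMod 16)) ↔ ∃ t : ZMod 16, r = 2 * t := by
  constructor
  · rintro ⟨s, ⟨k, rfl⟩, rfl⟩
    exact ⟨(k : ZMod 16), by push_cast; ring⟩
  · rintro ⟨t, rfl⟩
    refine ⟨2 * (t.val : ℤ), ⟨_, rfl⟩, ?_⟩
    push_cast
    simp [ZMod.natCast_val, ZMod.cast_id]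

lemma rep (x y r a d c f : ZMod 16) (h1 : a^2 - d^2 = x) (h2 : c^2 - f^2 = y) (hs : a + c = 1) :
    ∃ a d c f b e : ZMod 16, a^2 - d^2 = x ∧ c^2 - f^2 = y ∧ b*(a+c) - e*(d+f) = r :=
  ⟨a, d, c, f, r, 0, h1, h2, by rw [hs]; ring⟩

lemma char44 (r : ZMod 16) :
    (∃ a d c f b e : ZMod 16, a^2 - d^2 = 4 ∧ c^2 - f^2 = 4 ∧ b*(a+c) - e*(d+f) = r) ↔
      ∃ t : ZMod 16, r = 4 * t := by
  constructor
  · rintro ⟨a, d, c, f, b, e, h1, h2, h3⟩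
    obtain ⟨⟨u, rfl⟩, ⟨v, rfl⟩⟩ := L4 a d h1
    obtain ⟨⟨u', rfl⟩, ⟨v', rfl⟩⟩ := L4 c f h2
    exact ⟨b*(u+u'+1) - e*(v+v'), by linear_combination -h3⟩
  · rintro ⟨t, rfl⟩
    exact ⟨2, 0, 2, 0, t, 0, by decide, by decide, by ring⟩

lemma char1212 (r : ZMod 16) :
    (∃ a d c f b e : ZMod 16, a^2 - d^2 = 12 ∧ c^2 - f^2 = 12 ∧ b*(a+c) - e*(d+f) = r) ↔
      ∃ t : ZMod 16, r = 4 * t := by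
  constructor
  · rintro ⟨a, d, c, f, b, e, h1, h2, h3⟩
    obtain ⟨⟨u, rfl⟩, ⟨v, rfl⟩⟩ := L12 a d h1
    obtain ⟨⟨u', rfl⟩, ⟨v', rfl⟩⟩ := L12 c f h2
    exact ⟨b*(u+u') - e*(v+v'+1), by linear_combination -h3⟩
  · rintro ⟨t, rfl⟩
    exact ⟨4, 2, 0, 2, t, 0, by decide, by decide, by ring⟩

lemma char412 (r : ZMod 16) :
    (∃ a d c f b e : ZMod 16, a^2 - d^2 = 4 ∧ c^2 - f^2 = 12 ∧ b*(a+c) - e*(d+f) = r) ↔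
      ∃ t : ZMod 16, r = 2 * t := by
  constructor
  · rintro ⟨a, d, c, f, b, e, h1, h2, h3⟩
    obtain ⟨⟨u, rfl⟩, ⟨v, rfl⟩⟩ := L4 a d h1
    obtain ⟨⟨u', rfl⟩, ⟨v', rfl⟩⟩ := L12 c f h2
    exact ⟨b*(2*u+2*u'+1) - e*(2*v+2*v'+1), by linear_combination -h3⟩
  · rintro ⟨t, rfl⟩
    exact ⟨2, 0, 0, 2, t, 0, by decide, by decide, by ring⟩

lemma char124 (r : ZMod 16) :
    (∃ a d c f b e : ZMod 16, a^2 - d^2 = 12 ∧ c^2 - f^2 = 4 ∧ b*(a+c) - e*(d+f) = r) ↔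
      ∃ t : ZMod 16, r = 2 * t := by
  constructor
  · rintro ⟨a, d, c, f, b, e, h1, h2, h3⟩
    obtain ⟨⟨u, rfl⟩, ⟨v, rfl⟩⟩ := L12 a d h1
    obtain ⟨⟨u', rfl⟩, ⟨v', rfl⟩⟩ := L4 c f h2
    exact ⟨b*(2*u+2*u'+1) - e*(2*v+2*v'+1), by linear_combination -h3⟩
  · rintro ⟨t, rfl⟩
    exact ⟨0, 2, 2, 0, t, 0, by decide, by decide, by ring⟩

lemma char88 (r : ZMod 16) :
    (∃ a d c f b e : ZMod 16, a^2 - d^2 = 8 ∧ c^2 - f^2 = 8 ∧ b*(a+c) - e*(d+f) = r) ↔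
      ∃ t : ZMod 16, r = 2 * t := by
  constructor
  · rintro ⟨a, d, c, f, b, e, h1, h2, h3⟩
    obtain ⟨⟨u, rfl⟩, ⟨v, rfl⟩⟩ := L8 a d h1
    obtain ⟨⟨u', rfl⟩, ⟨v', rfl⟩⟩ := L8 c f h2
    exact ⟨b*(u+u'+1) - e*(v+v'+1), by linear_combination -h3⟩
  · rintro ⟨t, rfl⟩
    have h16 : (16 : ZMod 16) = 0 := by decide
    exact ⟨3, 1, 15, 3, t, 0, by decide, by decide, by linear_combination t * h16⟩

lemma case_false {P M1 M2 D1 D2 : Prop} (hP : P) (h1 : ¬M1) (h2 : ¬M2) :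
    ¬P ↔ (M1 ∧ ¬D1) ∨ (M2 ∧ ¬D2) := by tauto

lemma case_left {P D M1 M2 D2 : Prop} (h : P ↔ D) (h1 : M1) (h2 : ¬M2) :
    ¬P ↔ (M1 ∧ ¬D) ∨ (M2 ∧ ¬D2) := by tauto

lemma case_right {P D M1 M2 D1 : Prop} (h : P ↔ D) (h1 : ¬M1) (h2 : M2) :
    ¬P ↔ (M1 ∧ ¬D1) ∨ (M2 ∧ ¬D) := by tauto

set_option maxHeartbeats 2000000 in
theorem mod16_nonrepresentable (i j : ℕ) (hi : i ≤ 3) (hj : j ≤ 3) (r : ZMod 16) :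
    ¬ ReprDiffSqUT !![(4 * i : ZMod 16), r; 0, (4 * j : ZMod 16)] ↔
      (((i, j) ∈ ({(1, 1), (3, 3)} : Set (ℕ × ℕ))) ∧ ¬ (∃ s : ℤ, 4 ∣ s ∧ r = (s : ZMod 16))) ∨
      (((i, j) ∈ ({(1, 3), (2, 2), (3, 1)} : Set (ℕ × ℕ))) ∧ ¬ (∃ s : ℤ, 2 ∣ s ∧ r = (s : ZMod 16))) := by
  rw [key, div4_iff, div2_iff]
  have e0 : (4 * ((0:ℕ) : ZMod 16)) = 0 := by norm_num
  have e1 : (4 * ((1:ℕ) : ZMod 16)) = 4 := by norm_num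
  have e2 : (4 * ((2:ℕ) : ZMod 16)) = 8 := by norm_num
  have e3 : (4 * ((3:ℕ) : ZMod 16)) = 12 := by norm_num
  interval_cases i <;> interval_cases j <;>
      simp only [e0, e1, e2, e3]
  · exact case_false (rep _ _ r 0 0 1 1 (by decide) (by decide) (by decide)) (by simp [Prod.ext_iff]) (by simp [Prod.ext_iff])
  · exact case_false (rep _ _ r 15 1 2 0 (by decide) (by decide) (by decide)) (by simp [Prod.ext_iff]) (by simp [Prod.ext_iff])
  · exact case_false (rep _ _ r 14 2 3 1 (by decide) (by decide) (by decide)) (by simp [Prod.ext_iff]) (by simp [Prod.ext_iff])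
  · exact case_false (rep _ _ r 1 1 0 2 (by decide) (by decide) (by decide)) (by simp [Prod.ext_iff]) (by simp [Prod.ext_iff])
  · exact case_false (rep _ _ r 2 0 15 15 (by decide) (by decide) (by decide)) (by simp [Prod.ext_iff]) (by simp [Prod.ext_iff])
  · exact case_left (char44 r) (by simp [Prod.ext_iff]) (by simp [Prod.ext_iff])
  · exact case_false (rep _ _ r 14 0 3 1 (by decide) (by decide) (by decide)) (by simp [Prod.ext_iff]) (by simp [Prod.ext_iff])
  · exact case_right (char412 r) (by simp [Prod.ext_iff]) (by simp [Prod.ext_iff])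
  · exact case_false (rep _ _ r 3 1 14 14 (by decide) (by decide) (by decide)) (by simp [Prod.ext_iff]) (by simp [Prod.ext_iff])
  · exact case_false (rep _ _ r 15 3 2 0 (by decide) (by decide) (by decide)) (by simp [Prod.ext_iff]) (by simp [Prod.ext_iff])
  · exact case_right (char88 r) (by simp [Prod.ext_iff]) (by simp [Prod.ext_iff])
  · exact case_false (rep _ _ r 1 3 0 2 (by decide) (by decide) (by decide)) (by simp [Prod.ext_iff]) (by simp [Prod.ext_iff])
  · exact case_false (rep _ _ r 0 2 1 1 (by decide) (by decide) (by decide)) (by simp [Prod.ext_iff]) (by simp [Prod.ext_iff])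
  · exact case_right (char124 r) (by simp [Prod.ext_iff]) (by simp [Prod.ext_iff])
  · exact case_false (rep _ _ r 0 2 1 3 (by decide) (by decide) (by decide)) (by simp [Prod.ext_iff]) (by simp [Prod.ext_iff])
  · exact case_left (char1212 r) (by simp [Prod.ext_iff]) (by simp [Prod.ext_iff])
end
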